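/- Every quasi J-submodule of a finitely generated faithful multiplication R-module M is small in M; that is, if N is a quasi J-submodule of M and K is a submodule of M with N + K = M, then K = M. -/

import Mathlib

open Submodule Pointwise

/-- The ideal `(J(R)M : M)` where `J(R)` is the Jacobson radical of `R`. -/
def jacobsonColon (R M : Type*) [CommRing R] [AddCommGroup M] [Module R M] : Ideal R :=
  ((⊥ : Ideal R).jacobson • (⊤ : Submodule R M)).colon ⊤

/-- A prime submodule: a proper submodule `N` such that whenever `r • m ∈ N`,
either `m ∈ N` or `r • M ⊆ N`. -/
def IsPrimeSubmodule {R M : Type*} [CommRing R] [AddCommGroup M] [Module R M]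
    (N : Submodule R M) : Prop :=
  N ≠ ⊤ ∧ ∀ (r : R) (m : M), r • m ∈ N → m ∈ N ∨ r ∈ N.colon ⊤

/-- `M`-rad(N): the intersection of all prime submodules of `M` containing `N`
(equal to `⊤` if there are none). -/
def Mrad {R M : Type*} [CommRing R] [AddCommGroup M] [Module R M]
    (N : Submodule R M) : Submodule R M :=
  sInf {P : Submodule R M | IsPrimeSubmodule P ∧ N ≤ P}

/-- A quasi `J`-submodule. -/
def IsQuasiJSubmodule {R M : Type*} [CommRing R] [AddCommGroup M] [Module R M]
    (N : Submodule R M) : Prop :=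
  N ≠ ⊤ ∧ ∀ (r : R) (m : M), r • m ∈ N → r ∉ jacobsonColon R M → m ∈ Mrad N

/-! A quasi `J`-submodule `N` of a finitely generated multiplication module has `M`-rad(N) ≠ M,
witnessed by the prime submodule `p • M` for a maximal ideal `p ⊇ (N : M)`. Taking `m ∉ M`-rad(N),
every `r ∈ (N : M)` satisfies `r • m ∈ N`, so `r ∈ (J(R)M : M)`. Hence
`N = (N : M)M ≤ J(R)M`, and submodules of `J(R)M` are small by Nakayama's lemma. -/

section

variable {R M : Type*} [CommRing R] [AddCommGroup M] [Module R M]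

namespace Submodule

theorem colon_smul_top_le (N : Submodule R M) : N.colon ⊤ • (⊤ : Submodule R M) ≤ N :=
  smul_le.2 fun _ hr m _ => mem_colon.1 hr m trivial

theorem annihilator_le_colon_top (N : Submodule R M) : Module.annihilator R M ≤ N.colon ⊤ :=
  fun r hr => mem_colon.2 fun m _ => by simp [Module.mem_annihilator.1 hr m]

theorem smul_top_ne_top_of_annihilator_le [Module.Finite R M] {I : Ideal R} (hI : I ≠ ⊤)
    (hann : Module.annihilator R M ≤ I) : I • (⊤ : Submodule R M) ≠ ⊤ := by
  intro h
  obtain ⟨r, hr1, hr⟩ :=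
    exists_sub_one_mem_and_smul_eq_zero_of_fg_of_le_smul I ⊤ Module.Finite.fg_top h.ge
  have hrI : r ∈ I := hann (Module.mem_annihilator.2 fun m => hr m trivial)
  exact hI (I.eq_top_iff_one.2 (by simpa using I.sub_mem hrI hr1))

theorem eq_top_of_sup_eq_top_of_le_jacobson_smul_top [Module.Finite R M] {N K : Submodule R M}
    (hNJ : N ≤ (⊥ : Ideal R).jacobson • ⊤) (hNK : N ⊔ K = ⊤) : K = ⊤ := by
  refine top_le_iff.1 (le_of_le_smul_of_le_jacobson_bot Module.Finite.fg_top le_rfl ?_)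
  calc ⊤ = N ⊔ K := hNK.symm
    _ ≤ K ⊔ (⊥ : Ideal R).jacobson • ⊤ := sup_comm N K ▸ sup_le_sup_left hNJ K

end Submodule

theorem isPrimeSubmodule_smul_top {p : Ideal R} (hp : p.IsMaximal)
    (hpM : p • (⊤ : Submodule R M) ≠ ⊤) : IsPrimeSubmodule (p • (⊤ : Submodule R M)) := by
  refine ⟨hpM, fun r m hrm => ?_⟩
  by_cases hrp : r ∈ p
  · exact Or.inr (mem_colon.2 fun x _ => smul_mem_smul hrp trivial)
  · left
    obtain ⟨s, i, hi, hsi⟩ := hp.exists_inv hrp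
    have hm : m = s • (r • m) + i • m := by rw [smul_smul, ← add_smul, hsi, one_smul]
    rw [hm]
    exact add_mem (smul_mem _ s hrm) (smul_mem_smul hi trivial)

theorem exists_isPrimeSubmodule_le [Module.Finite R M] {N : Submodule R M} (hN : N ≠ ⊤)
    (hmulN : N = N.colon ⊤ • (⊤ : Submodule R M)) : ∃ P, IsPrimeSubmodule P ∧ N ≤ P := by
  have hcolon : N.colon ⊤ ≠ ⊤ := fun h => hN (hmulN.trans (by rw [h, top_smul]))
  obtain ⟨p, hp, hNp⟩ := Ideal.exists_le_maximal _ hcolon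
  have hpM : p • (⊤ : Submodule R M) ≠ ⊤ :=
    smul_top_ne_top_of_annihilator_le hp.ne_top ((annihilator_le_colon_top N).trans hNp)
  exact ⟨_, isPrimeSubmodule_smul_top hp hpM, hmulN.trans_le (smul_mono_left hNp)⟩

theorem mrad_ne_top [Module.Finite R M] {N : Submodule R M} (hN : N ≠ ⊤)
    (hmulN : N = N.colon ⊤ • (⊤ : Submodule R M)) : Mrad N ≠ ⊤ := by
  obtain ⟨P, hP, hNP⟩ := exists_isPrimeSubmodule_le hN hmulN
  exact ne_top_of_le_ne_top hP.1 (sInf_le ⟨hP, hNP⟩)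

namespace IsQuasiJSubmodule

variable [Module.Finite R M] {N : Submodule R M}

theorem colon_le_jacobsonColon (hN : IsQuasiJSubmodule N)
    (hmulN : N = N.colon ⊤ • (⊤ : Submodule R M)) : N.colon ⊤ ≤ jacobsonColon R M := by
  obtain ⟨m, hm⟩ : ∃ m, m ∉ Mrad N := by
    by_contra! h
    exact mrad_ne_top hN.1 hmulN (eq_top_iff.2 fun m _ => h m)
  intro r hr
  by_contra hrJ
  exact hm (hN.2 r m (mem_colon.1 hr m trivial) hrJ)

theorem le_jacobson_smul_top (hN : IsQuasiJSubmodule N)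
    (hmulN : N = N.colon ⊤ • (⊤ : Submodule R M)) :
    N ≤ (⊥ : Ideal R).jacobson • (⊤ : Submodule R M) :=
  calc N = N.colon ⊤ • ⊤ := hmulN
    _ ≤ jacobsonColon R M • ⊤ := smul_mono_left (hN.colon_le_jacobsonColon hmulN)
    _ ≤ (⊥ : Ideal R).jacobson • ⊤ := colon_smul_top_le _

end IsQuasiJSubmodule

end

theorem stmt18_general {R M : Type*} [CommRing R] [AddCommGroup M] [Module R M]
    [Module.Finite R M]
    (hmult : ∀ N : Submodule R M, N = N.colon ⊤ • (⊤ : Submodule R M))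
    (N : Submodule R M) (hN : IsQuasiJSubmodule N) :
    ∀ K : Submodule R M, N ⊔ K = ⊤ → K = ⊤ :=
  fun _ hNK => eq_top_of_sup_eq_top_of_le_jacobson_smul_top (hN.le_jacobson_smul_top (hmult N)) hNK

theorem stmt18 {R M : Type*} [CommRing R] [AddCommGroup M] [Module R M]
    [Module.Finite R M]
    (hfaithful : ∀ r : R, (∀ m : M, r • m = 0) → r = 0)
    (hmult : ∀ N : Submodule R M, N = N.colon ⊤ • (⊤ : Submodule R M))
    (N : Submodule R M) (hN : IsQuasiJSubmodule N) :
    ∀ K : Submodule R M, N ⊔ K = ⊤ → K = ⊤ :=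
  stmt18_general hmult N hN
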